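/- arXiv:2410.00772 — 2 statements merged into one kernel-verified Lean document; each statement's English description precedes it below -/
import Mathlib

section
/- For any Z ∈ ℝ^{m×n}, ε > 0, and any membership matrices Π = {Πʲ}_{j=1}^k with each Πʲ diagonal with nonnegative entries and Σ_j Πʲ = I_n, the coding rate reduction ΔR(Z, Π, ε) = (1/2)log det(I + (m/(nε²))ZZᵀ) − Σ_{j=1}^k (tr(Πʲ)/(2n))·log det(I + (m/(tr(Πʲ)ε²))ZΠʲZᵀ) is nonnegative. -/
open Matrix

section helpers

variable {N : Type*} [Fintype N] [DecidableEq N]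

lemma myTranspose_eq {A : Matrix N N ℝ} (h : A.IsHermitian) : Aᵀ = A := by
  have := h.eq; simpa using this

lemma myPosSemidef_smul {A : Matrix N N ℝ} (hA : A.PosSemidef) {c : ℝ} (hc : 0 ≤ c) :
    (c • A).PosSemidef := by
  refine ⟨?_, fun x => ?_⟩
  · simp [Matrix.IsHermitian, Matrix.conjTranspose_smul, myTranspose_eq hA.1]
  · exact (hA.smul hc).2 x

lemma myPosDef_smul {A : Matrix N N ℝ} (hA : A.PosDef) {c : ℝ} (hc : 0 < c) :
    (c • A).PosDef := by
  refine ⟨?_, fun x hx => ?_⟩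
  · simp [Matrix.IsHermitian, Matrix.conjTranspose_smul, myTranspose_eq hA.1]
  · exact (hA.smul hc).2 hx

lemma core_logdet {M : Matrix N N ℝ} (hM : M.PosDef) {a b : ℝ}
    (ha : 0 < a) (hb : 0 < b) (hab : a + b = 1) :
    b * Real.log M.det ≤ Real.log (a • (1 : Matrix N N ℝ) + b • M).det := by
  set μ := hM.1.eigenvalues with hμdef
  have hμ : ∀ i, 0 < μ i := hM.eigenvalues_pos
  set U := (Matrix.IsHermitian.eigenvectorUnitary hM.1 : Matrix N N ℝ) with hUdef
  have hU : U * star U = 1 :=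
    Matrix.mem_unitaryGroup_iff.mp (Matrix.IsHermitian.eigenvectorUnitary hM.1).2
  have hofReal : (RCLike.ofReal ∘ μ : N → ℝ) = μ := by
    funext i; simp [RCLike.ofReal_real_eq_id]
  have hdecomp : a • (1 : Matrix N N ℝ) + b • M
      = U * Matrix.diagonal (fun i => a + b * μ i) * star U := by
    have h1 : (1 : Matrix N N ℝ) = U * 1 * star U := by rw [mul_one, hU]
    calc a • (1 : Matrix N N ℝ) + b • M
        = a • (U * 1 * star U) + b • (U * Matrix.diagonal (RCLike.ofReal ∘ μ) * star U) := by
          rw [← h1]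
          conv_lhs => rw [hM.1.spectral_theorem, Unitary.conjStarAlgAut_apply]
      _ = U * (a • (1 : Matrix N N ℝ) + b • Matrix.diagonal (RCLike.ofReal ∘ μ)) * star U := by
          simp only [Matrix.mul_add, Matrix.add_mul, Matrix.mul_smul, Matrix.smul_mul]
      _ = U * Matrix.diagonal (fun i => a + b * μ i) * star U := by
          rw [hofReal, ← Matrix.diagonal_one, ← Matrix.diagonal_smul, ← Matrix.diagonal_smul,
            Matrix.diagonal_add]
          congr 2
          funext i
          simp [smul_eq_mul]
  have hdet : (a • (1 : Matrix N N ℝ) + b • M).det = ∏ i, (a + b * μ i) := by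
    rw [hdecomp, Matrix.det_mul_right_comm, hU, one_mul, Matrix.det_diagonal]
  have hdetM : M.det = ∏ i, μ i := by
    have := hM.1.det_eq_prod_eigenvalues
    simpa using this
  have hterm : ∀ i, 0 < a + b * μ i := fun i => by nlinarith [hμ i]
  rw [hdet, hdetM, Real.log_prod (fun i _ => (hμ i).ne'),
    Real.log_prod (fun i _ => (hterm i).ne'), Finset.mul_sum]
  apply Finset.sum_le_sum
  intro i _
  have := (strictConcaveOn_log_Ioi.concaveOn).2 (Set.mem_Ioi.mpr one_pos)
    (Set.mem_Ioi.mpr (hμ i)) ha.le hb.le hab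
  simpa using this

lemma pair_logdet {A B : Matrix N N ℝ} (hA : A.PosDef) (hB : B.PosDef) {a b : ℝ}
    (ha : 0 ≤ a) (hb : 0 ≤ b) (hab : a + b = 1) :
    a * Real.log A.det + b * Real.log B.det ≤ Real.log (a • A + b • B).det := by
  rcases ha.eq_or_lt with rfl | ha'
  · have hb1 : b = 1 := by linarith
    subst hb1; simp
  rcases hb.eq_or_lt with rfl | hb'
  · have ha1 : a = 1 := by linarith
    subst ha1; simp
  open scoped MatrixOrder in set L := CFC.sqrt A with hLdef
  have hLL : L * L = A := by
    open scoped MatrixOrder in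
    exact CFC.sqrt_mul_sqrt_self A (Matrix.nonneg_iff_posSemidef.mpr hA.posSemidef)
  have hLH : L.conjTranspose = L := by
    open scoped MatrixOrder in
    exact (Matrix.nonneg_iff_posSemidef.mp (CFC.sqrt_nonneg A)).1
  have hdetL : L.det * L.det = A.det := by rw [← Matrix.det_mul, hLL]
  have hdetLne : L.det ≠ 0 := by
    intro h; rw [h, mul_zero] at hdetL; exact hA.det_pos.ne (by linarith)
  have hLunit : IsUnit L.det := isUnit_iff_ne_zero.mpr hdetLne
  set M := L⁻¹ * B * L⁻¹ with hMdef
  have hLinvH : (L⁻¹).conjTranspose = L⁻¹ := by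
    rw [Matrix.conjTranspose_nonsing_inv, hLH]
  have hMpsd : M.PosSemidef := by
    have := hB.posSemidef.mul_mul_conjTranspose_same L⁻¹
    rwa [hLinvH] at this
  have hLML : L * M * L = B := by
    rw [hMdef, ← Matrix.mul_assoc, ← Matrix.mul_assoc,
      Matrix.mul_nonsing_inv _ hLunit, Matrix.one_mul, Matrix.mul_assoc,
      Matrix.nonsing_inv_mul _ hLunit, Matrix.mul_one]
  have hdetM : L.det * M.det * L.det = B.det := by
    rw [← Matrix.det_mul, ← Matrix.det_mul, hLML]
  have hdetMpos : 0 < M.det := by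
    rcases lt_trichotomy M.det 0 with h | h | h
    · nlinarith [hB.det_pos, sq_nonneg L.det]
    · exfalso; rw [h] at hdetM; simp at hdetM; nlinarith [hB.det_pos]
    · exact h
  have hMpd : M.PosDef := by
    refine Matrix.PosDef.of_dotProduct_mulVec_pos hMpsd.1 (fun x hx => ?_)
    rcases (hMpsd.dotProduct_mulVec_nonneg x).lt_or_eq with h | h
    · exact h
    · exfalso
      have hker : M *ᵥ x = 0 := (hMpsd.dotProduct_mulVec_zero_iff x).mp h.symm
      have hinj : Function.Injective M.mulVec :=
        Matrix.mulVec_injective_iff_isUnit.mpr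
          ((Matrix.isUnit_iff_isUnit_det M).mpr (isUnit_iff_ne_zero.mpr hdetMpos.ne'))
      exact hx (hinj (by simp [hker]))
  have hsm : a • A + b • B = L * (a • (1 : Matrix N N ℝ) + b • M) * L := by
    have hexp : L * (a • (1 : Matrix N N ℝ) + b • M) * L
        = a • (L * (1 : Matrix N N ℝ) * L) + b • (L * M * L) := by
      simp only [Matrix.mul_add, Matrix.add_mul, Matrix.mul_smul, Matrix.smul_mul]
    rw [hexp, Matrix.mul_one, hLL, hLML]
  have hXpd : (a • (1 : Matrix N N ℝ) + b • M).PosDef :=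
    Matrix.PosDef.add (myPosDef_smul Matrix.PosDef.one ha') (myPosDef_smul hMpd hb')
  have hdetsum : (a • A + b • B).det = A.det * (a • (1 : Matrix N N ℝ) + b • M).det := by
    rw [hsm, Matrix.det_mul, Matrix.det_mul]
    rw [← hdetL]; ring
  have hdetB : B.det = A.det * M.det := by rw [← hdetM, ← hdetL]; ring
  have hlog1 : Real.log (a • A + b • B).det
      = Real.log A.det + Real.log (a • (1 : Matrix N N ℝ) + b • M).det := by
    rw [hdetsum, Real.log_mul hA.det_pos.ne' hXpd.det_pos.ne']
  have hlog2 : Real.log B.det = Real.log A.det + Real.log M.det := by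
    rw [hdetB, Real.log_mul hA.det_pos.ne' hdetMpos.ne']
  have hcore := core_logdet hMpd ha' hb' hab
  rw [hlog1, hlog2]
  have e : a * Real.log A.det + b * Real.log A.det = Real.log A.det := by
    rw [← add_mul, hab, one_mul]
  linarith

lemma logdet_concaveOn :
    ConcaveOn ℝ {M : Matrix N N ℝ | M.PosDef} (fun M => Real.log M.det) := by
  constructor
  · intro x hx y hy a b ha hb hab
    rcases ha.eq_or_lt with rfl | ha'
    · have hb1 : b = 1 := by linarith
      subst hb1; simpa using hy
    rcases hb.eq_or_lt with rfl | hb'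
    · have ha1 : a = 1 := by linarith
      subst ha1; simpa using hx
    · exact Matrix.PosDef.add (myPosDef_smul hx ha') (myPosDef_smul hy hb')
  · intro x hx y hy a b ha hb hab
    simpa [smul_eq_mul] using pair_logdet hx hy ha hb hab

end helpers

/-- The coding rate reduction ΔR(Z, Π, ε) is nonnegative: for any Z, ε > 0, and
membership matrices Πʲ (diagonal, nonnegative entries, summing to the identity,
each with positive trace),
(1/2)log det(I + (m/(nε²))ZZᵀ) ≥ Σⱼ (tr Πʲ/(2n)) log det(I + (m/(tr Πʲ ε²))ZΠʲZᵀ). -/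
theorem stmt9 {m n k : ℕ} (hn : 0 < n)
    (Z : Matrix (Fin m) (Fin n) ℝ) (ε : ℝ) (hε : 0 < ε)
    (P : Fin k → Matrix (Fin n) (Fin n) ℝ)
    (hdiag : ∀ j, (P j).IsDiag)
    (hnonneg : ∀ j i, 0 ≤ P j i i)
    (hsum : ∑ j, P j = 1)
    (htr : ∀ j, 0 < (P j).trace) :
    0 ≤ (1 / 2) * Real.log ((1 + ((m : ℝ) / (n * ε ^ 2)) • (Z * Zᵀ)).det) -
        ∑ j, ((P j).trace / (2 * n)) *
          Real.log ((1 + ((m : ℝ) / ((P j).trace * ε ^ 2)) • (Z * P j * Zᵀ)).det) := by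
  have hnR : (0 : ℝ) < (n : ℝ) := by exact_mod_cast hn
  have hZT : Zᵀ = Zᴴ := by
    funext i j; simp [Matrix.conjTranspose_apply, Matrix.transpose_apply]
  -- weights
  have htrsum : ∑ j, (P j).trace = (n : ℝ) := by
    rw [← Matrix.trace_sum, hsum, Matrix.trace_one]
    simp
  have hwsum : ∑ j, (P j).trace / (n : ℝ) = 1 := by
    rw [← Finset.sum_div, htrsum, div_self hnR.ne']
  -- positive definiteness of each A j
  have hApd : ∀ j, (1 + ((m : ℝ) / ((P j).trace * ε ^ 2)) • (Z * P j * Zᵀ)).PosDef := by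
    intro j
    have hPpsd : (P j).PosSemidef := by
      rw [← (hdiag j).diagonal_diag]
      exact Matrix.PosSemidef.diagonal (Pi.le_def.mpr fun i => hnonneg j i)
    have hXpsd : (Z * P j * Zᵀ).PosSemidef := by
      rw [hZT]; exact hPpsd.mul_mul_conjTranspose_same Z
    have hc0 : 0 ≤ (m : ℝ) / ((P j).trace * ε ^ 2) :=
      div_nonneg (Nat.cast_nonneg m) (mul_nonneg (htr j).le (sq_nonneg ε))
    exact Matrix.PosDef.add_posSemidef Matrix.PosDef.one (myPosSemidef_smul hXpsd hc0)
  -- the convex combination of the A j is the global matrix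
  have hsumA : ∑ j, ((P j).trace / (n : ℝ)) •
        (1 + ((m : ℝ) / ((P j).trace * ε ^ 2)) • (Z * P j * Zᵀ))
      = 1 + ((m : ℝ) / ((n : ℝ) * ε ^ 2)) • (Z * Zᵀ) := by
    have hterm : ∀ j, ((P j).trace / (n : ℝ)) •
          (1 + ((m : ℝ) / ((P j).trace * ε ^ 2)) • (Z * P j * Zᵀ))
        = ((P j).trace / (n : ℝ)) • (1 : Matrix (Fin m) (Fin m) ℝ)
          + ((m : ℝ) / ((n : ℝ) * ε ^ 2)) • (Z * P j * Zᵀ) := by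
      intro j
      rw [smul_add, smul_smul]
      congr 2
      field_simp [(htr j).ne', hnR.ne', hε.ne']
    rw [Finset.sum_congr rfl (fun j _ => hterm j), Finset.sum_add_distrib,
      ← Finset.sum_smul, hwsum, one_smul, ← Finset.smul_sum]
    congr 1
    congr 1
    calc ∑ j, Z * P j * Zᵀ = Z * (∑ j, P j) * Zᵀ := by
          rw [← Matrix.sum_mul, ← Matrix.mul_sum]
      _ = Z * Zᵀ := by rw [hsum, Matrix.mul_one]
  -- Jensen
  have hj := logdet_concaveOn.le_map_sum (t := Finset.univ)
    (w := fun j => (P j).trace / (n : ℝ))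
    (p := fun j => 1 + ((m : ℝ) / ((P j).trace * ε ^ 2)) • (Z * P j * Zᵀ))
    (fun j _ => div_nonneg (htr j).le hnR.le) hwsum (fun j _ => hApd j)
  rw [hsumA] at hj
  have key : ∑ j, ((P j).trace / (n : ℝ)) *
        Real.log ((1 + ((m : ℝ) / ((P j).trace * ε ^ 2)) • (Z * P j * Zᵀ)).det)
      ≤ Real.log ((1 + ((m : ℝ) / ((n : ℝ) * ε ^ 2)) • (Z * Zᵀ)).det) := by
    simpa [smul_eq_mul] using hj
  have hhalf : ∑ j, ((P j).trace / (2 * (n : ℝ))) *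
        Real.log ((1 + ((m : ℝ) / ((P j).trace * ε ^ 2)) • (Z * P j * Zᵀ)).det)
      = (1 / 2) * ∑ j, ((P j).trace / (n : ℝ)) *
        Real.log ((1 + ((m : ℝ) / ((P j).trace * ε ^ 2)) • (Z * P j * Zᵀ)).det) := by
    rw [Finset.mul_sum]
    refine Finset.sum_congr rfl fun j _ => ?_
    field_simp
  rw [hhalf]
  linarith
end

section
/- The map M ↦ log det(M) is strictly concave on the cone of real symmetric positive definite m×m matrices; consequently for Π in the simplex with Σ_j Πʲ = I and weights tr(Πʲ)/n summing to 1, R(Z,ε) ≥ R_c(Z,ε|Π). -/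
open Matrix Finset

section Aux

open Matrix Finset

variable {l : Type*} [Fintype l] [DecidableEq l]

lemma psd_smul {M : Matrix l l ℝ} (hM : M.PosSemidef) {c : ℝ} (hc : 0 ≤ c) :
    (c • M).PosSemidef := by
  have ht : Mᵀ = M := by
    have := hM.1.eq; rwa [conjTranspose_eq_transpose_of_trivial] at this
  refine PosSemidef.of_dotProduct_mulVec_nonneg ?_ fun x => ?_
  · simp [Matrix.IsHermitian, conjTranspose_smul, ht]
  · rw [smul_mulVec, dotProduct_smul]
    exact mul_nonneg hc (hM.dotProduct_mulVec_nonneg x)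

lemma pd_smul {M : Matrix l l ℝ} (hM : M.PosDef) {c : ℝ} (hc : 0 < c) :
    (c • M).PosDef := by
  have ht : Mᵀ = M := by
    have := hM.1.eq; rwa [conjTranspose_eq_transpose_of_trivial] at this
  refine PosDef.of_dotProduct_mulVec_pos ?_ fun x hx => ?_
  · simp [Matrix.IsHermitian, conjTranspose_smul, ht]
  · rw [smul_mulVec, dotProduct_smul]
    exact mul_pos hc (hM.dotProduct_mulVec_pos hx)

lemma pd_conj {B N : Matrix l l ℝ} (hB : B.PosDef) (hN : IsUnit N.det) :
    (Nᴴ * B * N).PosDef := by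
  have ht : Bᵀ = B := by
    have := hB.1.eq; rwa [conjTranspose_eq_transpose_of_trivial] at this
  refine PosDef.of_dotProduct_mulVec_pos ?_ fun x hx => ?_
  · simp [Matrix.IsHermitian, conjTranspose_mul, ht, Matrix.mul_assoc]
  · have hNx : N *ᵥ x ≠ 0 := by
      intro h
      apply hx
      have := congrArg (fun v => N⁻¹ *ᵥ v) h
      simpa [mulVec_mulVec, Matrix.nonsing_inv_mul N hN] using this
    have h2 := hB.dotProduct_mulVec_pos hNx
    have : star x ⬝ᵥ (Nᴴ * B * N) *ᵥ x = star (N *ᵥ x) ⬝ᵥ B *ᵥ (N *ᵥ x) := by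
      rw [← mulVec_mulVec, ← mulVec_mulVec, Matrix.dotProduct_mulVec (star x),
        ← Matrix.star_mulVec]
    rw [this]; exact h2

open Matrix Finset

variable {l : Type*} [Fintype l] [DecidableEq l]

lemma det_affine_comb {C : Matrix l l ℝ} (hC : C.IsHermitian) (a b : ℝ) :
    (a • (1 : Matrix l l ℝ) + b • C).det = ∏ i, (a + b * hC.eigenvalues i) := by
  set U : Matrix l l ℝ := (hC.eigenvectorUnitary : Matrix l l ℝ) with hUdef
  have hU : U * star U = 1 := mem_unitaryGroup_iff.mp hC.eigenvectorUnitary.2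
  have hD : (diagonal (RCLike.ofReal ∘ hC.eigenvalues) : Matrix l l ℝ)
      = diagonal hC.eigenvalues := by
    rw [RCLike.ofReal_real_eq_id, Function.id_comp]
  have key : a • (1 : Matrix l l ℝ) + b • C
      = U * (a • 1 + b • diagonal hC.eigenvalues) * star U := by
    conv_lhs => rw [hC.spectral_theorem, hD]
    simp only [Unitary.conjStarAlgAut_apply, ← hUdef, Matrix.mul_add, Matrix.add_mul,
      Matrix.mul_smul, Matrix.smul_mul, Matrix.mul_one, hU, Matrix.mul_assoc]
  rw [key, det_mul_right_comm, hU, one_mul]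
  have : a • (1 : Matrix l l ℝ) + b • diagonal hC.eigenvalues
      = diagonal (fun i => a + b * hC.eigenvalues i) := by
    rw [← diagonal_one, ← diagonal_smul, ← diagonal_smul, diagonal_add]
    congr 1
    ext i
    simp
  rw [this, det_diagonal]

open Matrix Finset

variable {l : Type*} [Fintype l] [DecidableEq l]

open scoped MatrixOrder in
lemma logdet_sc : StrictConcaveOn ℝ {M : Matrix l l ℝ | M.PosDef}
    (fun M => Real.log M.det) := by
  constructor
  · intro A hA B hB a b ha hb hab
    simp only [Set.mem_setOf_eq] at hA hB ⊢
    rcases eq_or_lt_of_le ha with h | h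
    · have hb1 : b = 1 := by linarith
      simpa [← h, hb1] using hB
    · exact (pd_smul hA h).add_posSemidef (psd_smul hB.posSemidef hb)
  · rintro A hA B hB hAB a b ha hb hab
    simp only [Set.mem_setOf_eq] at hA hB
    set S := CFC.sqrt A with hSdef
    have hS : S.PosSemidef := (CFC.sqrt_nonneg A).posSemidef
    have hSS : S * S = A := CFC.sqrt_mul_sqrt_self A hA.posSemidef.nonneg
    have hdetS : S.det ≠ 0 := by
      intro h
      have hp := hA.det_pos
      rw [← hSS, det_mul, h, mul_zero] at hp
      exact lt_irrefl _ hp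
    have hSunit : IsUnit S.det := isUnit_iff_ne_zero.mpr hdetS
    have hSinvdet : IsUnit S⁻¹.det := S.isUnit_nonsing_inv_det hSunit
    have hSinvH : S⁻¹ᴴ = S⁻¹ := hS.1.inv.eq
    set C := S⁻¹ * B * S⁻¹ with hCdef
    have hC : C.PosDef := by
      have := pd_conj hB hSinvdet (N := S⁻¹)
      rwa [hSinvH] at this
    have hSC : S * C * S = B := by
      have e : S * (S⁻¹ * B * S⁻¹) * S = S * S⁻¹ * B * (S⁻¹ * S) := by
        simp only [Matrix.mul_assoc]
      rw [hCdef, e, Matrix.mul_nonsing_inv _ hSunit, Matrix.nonsing_inv_mul _ hSunit,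
        Matrix.one_mul, Matrix.mul_one]
    set μ := hC.1.eigenvalues with hμdef
    have hμpos : ∀ i, 0 < μ i := hC.eigenvalues_pos
    have hdetC : C.det = ∏ i, μ i := by
      have := hC.1.det_eq_prod_eigenvalues
      simpa [RCLike.ofReal_real_eq_id] using this
    have hdetSS : S.det * S.det = A.det := by
      have h2 := congrArg det hSS
      rwa [det_mul] at h2
    have hdetB : B.det = A.det * C.det := by
      have h1 := congrArg det hSC
      rw [det_mul, det_mul] at h1
      rw [← h1, ← hdetSS]; ring
    have hcomb : a • A + b • B = S * (a • 1 + b • C) * S := by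
      simp only [Matrix.mul_add, Matrix.add_mul, Matrix.mul_smul, Matrix.smul_mul,
        Matrix.mul_one, hSS, hSC]
    have hdetComb : (a • A + b • B).det = A.det * ∏ i, (a + b * μ i) := by
      have h1 := congrArg det hcomb
      rw [det_mul, det_mul, det_affine_comb hC.1 a b] at h1
      rw [h1, ← hdetSS]; ring
    have habpos : ∀ i, 0 < a + b * μ i := fun i =>
      add_pos ha (mul_pos hb (hμpos i))
    -- strictness witness
    have hC1 : C ≠ 1 := by
      intro h
      exact hAB (by rw [← hSC, h, Matrix.mul_one, hSS])
    have hex : ∃ i, μ i ≠ 1 := by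
      by_contra h
      push_neg at h
      apply hC1
      have hU : (hC.1.eigenvectorUnitary : Matrix l l ℝ)
          * star (hC.1.eigenvectorUnitary : Matrix l l ℝ) = 1 :=
        mem_unitaryGroup_iff.mp hC.1.eigenvectorUnitary.2
      have hD : (diagonal (RCLike.ofReal ∘ μ) : Matrix l l ℝ) = 1 := by
        rw [RCLike.ofReal_real_eq_id, Function.id_comp]
        rw [show μ = fun _ => (1 : ℝ) from funext h, diagonal_one]
      conv_lhs => rw [hC.1.spectral_theorem]
      rw [Unitary.conjStarAlgAut_apply, hD, Matrix.mul_one]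
      exact hU
    obtain ⟨i₀, hi₀⟩ := hex
    -- per-coordinate log inequalities
    have hle : ∀ i ∈ (univ : Finset l),
        b * Real.log (μ i) ≤ Real.log (a + b * μ i) := by
      intro i _
      have := (strictConcaveOn_log_Ioi.concaveOn).2 (Set.mem_Ioi.mpr one_pos)
        (Set.mem_Ioi.mpr (hμpos i)) ha.le hb.le hab
      simpa [smul_eq_mul] using this
    have hlt : b * Real.log (μ i₀) < Real.log (a + b * μ i₀) := by
      have := strictConcaveOn_log_Ioi.2 (Set.mem_Ioi.mpr one_pos)
        (Set.mem_Ioi.mpr (hμpos i₀)) (fun h => hi₀ h.symm) ha hb hab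
      simpa [smul_eq_mul] using this
    have hsum : ∑ i, b * Real.log (μ i) < ∑ i, Real.log (a + b * μ i) :=
      Finset.sum_lt_sum hle ⟨i₀, mem_univ _, hlt⟩
    -- assemble
    simp only [smul_eq_mul]
    have e1 : Real.log ((a • A + b • B).det)
        = Real.log A.det + ∑ i, Real.log (a + b * μ i) := by
      rw [hdetComb, Real.log_mul (ne_of_gt hA.det_pos)
        (ne_of_gt (Finset.prod_pos fun i _ => habpos i)),
        Real.log_prod (fun i _ => ne_of_gt (habpos i))]
    have e2 : Real.log B.det = Real.log A.det + ∑ i, Real.log (μ i) := by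
      rw [hdetB, Real.log_mul (ne_of_gt hA.det_pos) (ne_of_gt hC.det_pos), hdetC,
        Real.log_prod (fun i _ => ne_of_gt (hμpos i))]
    rw [e1, e2]
    have hmulsum : b * ∑ i, Real.log (μ i) = ∑ i, b * Real.log (μ i) :=
      Finset.mul_sum _ _ _
    have hsplit : a * Real.log A.det + b * Real.log A.det = Real.log A.det := by
      rw [← add_mul, hab, one_mul]
    linarith [hsum, hmulsum, hsplit]

end Aux

open Matrix

/-- log det is strictly concave on the cone of real symmetric positive definite
matrices; consequently, for membership matrices Πʲ (diagonal, nonnegative, summing to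
the identity) with weights tr(Πʲ)/n summing to 1, R(Z,ε) ≥ R_c(Z,ε|Π). -/
theorem stmt10 {d : ℕ} :
    StrictConcaveOn ℝ {M : Matrix (Fin d) (Fin d) ℝ | M.PosDef}
      (fun M => Real.log M.det) ∧
    ∀ (m n k : ℕ), 0 < n → ∀ (Z : Matrix (Fin m) (Fin n) ℝ) (ε : ℝ), 0 < ε →
      ∀ (P : Fin k → Matrix (Fin n) (Fin n) ℝ),
        (∀ j, (P j).IsDiag) → (∀ j i, 0 ≤ P j i i) → (∑ j, P j = 1) →
        (∀ j, 0 < (P j).trace) →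
        ∑ j, ((P j).trace / (2 * n)) *
            Real.log ((1 + ((m : ℝ) / ((P j).trace * ε ^ 2)) • (Z * P j * Zᵀ)).det) ≤
          (1 / 2) * Real.log ((1 + ((m : ℝ) / (n * ε ^ 2)) • (Z * Zᵀ)).det) := by
  refine ⟨logdet_sc, ?_⟩
  intro m n k hn Z ε hε P hdiag hnn hsum htr
  have hn' : (n : ℝ) ≠ 0 := Nat.cast_ne_zero.mpr hn.ne'
  set c : Fin k → ℝ := fun j => (m : ℝ) / ((P j).trace * ε ^ 2) with hc
  set w : Fin k → ℝ := fun j => (P j).trace / n with hwdef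
  set A : Fin k → Matrix (Fin m) (Fin m) ℝ := fun j => 1 + c j • (Z * P j * Zᵀ) with hAdef
  have htrsum : ∑ j, (P j).trace = (n : ℝ) := by
    rw [← Matrix.trace_sum, hsum, Matrix.trace_one]
    simp
  have hw1 : ∑ j, w j = 1 := by
    rw [hwdef, ← Finset.sum_div, htrsum, div_self hn']
  have hwnn : ∀ j, 0 ≤ w j := fun j => div_nonneg (htr j).le (Nat.cast_nonneg n)
  have hY : ∀ j, (Z * P j * Zᵀ).PosSemidef := by
    intro j
    have hP : (P j).PosSemidef := by
      rw [← (hdiag j).diagonal_diag]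
      exact Matrix.PosSemidef.diagonal (fun i => hnn j i)
    have := hP.mul_mul_conjTranspose_same Z
    rwa [Matrix.conjTranspose_eq_transpose_of_trivial] at this
  have hApd : ∀ j, (A j).PosDef := by
    intro j
    exact Matrix.PosDef.add_posSemidef Matrix.PosDef.one
      (psd_smul (hY j) (div_nonneg (Nat.cast_nonneg m) (mul_nonneg (htr j).le (sq_nonneg ε))))
  have jensen := ((logdet_sc (l := Fin m)).concaveOn).le_map_sum
    (t := Finset.univ) (w := w) (p := A) (fun j _ => hwnn j) hw1
    (fun j _ => hApd j)
  have hpt : ∑ j, w j • A j = 1 + ((m : ℝ) / (n * ε ^ 2)) • (Z * Zᵀ) := by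
    have h1 : ∀ j, w j • A j
        = w j • (1 : Matrix (Fin m) (Fin m) ℝ)
          + ((m : ℝ) / (n * ε ^ 2)) • (Z * P j * Zᵀ) := by
      intro j
      rw [hAdef, smul_add, smul_smul]
      congr 2
      rw [hwdef, hc]
      field_simp [(htr j).ne', hε.ne']
    rw [Finset.sum_congr rfl fun j _ => h1 j, Finset.sum_add_distrib,
      ← Finset.sum_smul, hw1, one_smul, ← Finset.smul_sum]
    congr 1
    rw [← Matrix.sum_mul, ← Matrix.mul_sum, hsum, Matrix.mul_one]
  rw [hpt] at jensen
  simp only [smul_eq_mul] at jensen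
  calc ∑ j, ((P j).trace / (2 * n)) * Real.log ((1 + c j • (Z * P j * Zᵀ)).det)
      = (1 / 2) * ∑ j, w j * Real.log ((A j).det) := by
        rw [Finset.mul_sum]
        refine Finset.sum_congr rfl fun j _ => ?_
        rw [hAdef, hwdef]
        ring
    _ ≤ (1 / 2) * Real.log ((1 + ((m : ℝ) / (n * ε ^ 2)) • (Z * Zᵀ)).det) := by
        have h2 : (0:ℝ) ≤ 1/2 := by norm_num
        exact mul_le_mul_of_nonneg_left jensen h2
end
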